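/- Let A be an associative C-algebra, W a representation of A via ρ: A → End(W), and extend ρ to a Lie algebra action ρ̂ of A on Sym(W) by derivations, and further to an algebra map ρ̂: U(A) → End(Sym(W)) from the universal enveloping algebra of A (viewed as a Lie algebra via commutators). For μ ∈ U(A) and d ≥ 1, let Φ^d_μ = ρ̂(μ)|_{Sym^d(W)}. Let E ⊆ End(Sym^d(W)) be the span of all Φ^d_μ, filtered by E_r = span{Φ^d_μ : deg μ ≤ r}. Then E = E_d. -/

import Mathlib

/-!
STATEMENT 14: Let `A` be an associative ℂ-algebra acting on `W` via
`ρ : A → End(W)`, extended by derivations to an action `ρ̂` of `U(A)` on `Sym(W)`.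
For `μ ∈ U(A)` and `d ≥ 1`, let `Φ^d_μ = ρ̂(μ)|_{Sym^d(W)}`, let
`E ⊆ End(Sym^d(W))` be the span of all `Φ^d_μ`, and `E_r` the span of those with
`deg μ ≤ r`.  Then `E = E_d`.
Here we realize `W = ι →₀ ℂ` (a vector space with basis `ι`), `Sym(W)` as the
polynomial ring `ℂ[ι]` with `Sym^d(W)` its degree-`d` homogeneous component, and
`ρ̂(μ)` for `μ` of degree `≤ r` as linear combinations of compositions of at most `r`
of the derivations extending `ρ(a)`.
-/

noncomputable section

open MvPolynomial

variable (A : Type) [Ring A] [Algebra ℂ A] (ι : Type)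
  (ρ : A →ₐ[ℂ] Module.End ℂ (ι →₀ ℂ))

/-- The embedding `W = ι →₀ ℂ → ℂ[ι]` sending basis vectors to the variables. -/
def emb : (ι →₀ ℂ) →ₗ[ℂ] MvPolynomial ι ℂ :=
  Finsupp.linearCombination ℂ MvPolynomial.X

/-- The derivation `ρ̂(a)` of `Sym(W) = ℂ[ι]` extending `ρ(a)`. -/
def Der (a : A) : Derivation ℂ (MvPolynomial ι ℂ) (MvPolynomial ι ℂ) :=
  MvPolynomial.mkDerivation ℂ (fun i => emb ι (ρ a (Finsupp.single i 1)))

/-- The operator `ρ̂(a₁ ⋯ a_s)` for a list `l = [a₁,...,a_s]`. -/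
def compDer (l : List A) : Module.End ℂ (MvPolynomial ι ℂ) :=
  (l.map (fun a => ((Der A ι ρ a).toLinearMap : Module.End ℂ (MvPolynomial ι ℂ)))).prod

/-- The restriction `Φ^d_{a₁⋯a_s}` of `ρ̂(a₁⋯a_s)` to `Sym^d(W)`. -/
def Phi (d : ℕ) (l : List A) :
    (MvPolynomial.homogeneousSubmodule ι ℂ d) →ₗ[ℂ] MvPolynomial ι ℂ :=
  (compDer A ι ρ l) ∘ₗ (MvPolynomial.homogeneousSubmodule ι ℂ d).subtype

/-!
For a finite set `u` of labels and elements `c t ∈ A`, let `N u c` be the normal-ordered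
product `∑ ∏_{t ∈ u} ρ(c t)(x_{i t}) ∂_{i t}`: it is the coefficient of `∏_{t ∈ u} T t` in the
polarization `f (x + ∑_{t ∈ u} T t • ρ(c t) x)`, so it kills every polynomial of degree `< #u`.
The Leibniz rule gives, for a fresh label `t₀`,
`ρ̂(a) ∘ N u c = N (u ∪ {t₀}) c[t₀ ↦ a] + ∑_{t ∈ u} N u c[t ↦ a * c t]`.
Read forwards, this expands every product `ρ̂(a₁) ⋯ ρ̂(aₛ)` into normal-ordered products; read
backwards, by induction on `#u`, it writes `N u c` as a combination of products of at most `#u`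
derivations. On `Sym^d(W)` only the `N u c` with `#u ≤ d` survive.
-/

namespace Finset

variable {α : Type*} [DecidableEq α] {u : Finset α} {t : α}

lemma toFinsupp_val_sub_single (ht : t ∈ u) :
    Multiset.toFinsupp u.val - Finsupp.single t 1 = Multiset.toFinsupp (u.erase t).val := by
  rw [← Multiset.cons_erase (Finset.mem_val.mpr ht), ← Multiset.singleton_add, map_add,
    Multiset.toFinsupp_singleton, add_tsub_cancel_left, Finset.erase_val]

lemma sum_sum_erase_comm {M : Type*} [AddCommMonoid M] (u : Finset α) (f : α → α → M) :
    ∑ t ∈ u, ∑ s ∈ u.erase t, f t s = ∑ t ∈ u, ∑ s ∈ u.erase t, f s t :=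
  sum_comm' fun t s => by simp only [mem_erase]; tauto

end Finset

theorem MvPolynomial.totalDegree_aeval_le {R S σ τ : Type*} [CommSemiring R] [CommSemiring S]
    [Algebra R S] (g : σ → MvPolynomial τ S) (hg : ∀ i, (g i).totalDegree ≤ 1)
    (x : MvPolynomial σ R) : (aeval g x).totalDegree ≤ x.totalDegree := by
  conv_lhs => rw [x.as_sum, map_sum]
  refine totalDegree_finsetSum_le fun m hm => ?_
  rw [aeval_monomial, MvPolynomial.algebraMap_apply]
  refine (totalDegree_mul _ _).trans ?_
  rw [totalDegree_C, zero_add]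
  refine (totalDegree_finsetProd _ _).trans
    ((Finset.sum_le_sum fun i _ => ?_).trans (le_totalDegree hm))
  calc (g i ^ m i).totalDegree ≤ m i * (g i).totalDegree := totalDegree_pow _ _
    _ ≤ m i := by simpa using Nat.mul_le_mul_left (m i) (hg i)

section Polarization

variable {R σ : Type*} [CommSemiring R] (u : Finset ℕ) (v : ℕ → σ → MvPolynomial σ R)

def polarize : MvPolynomial σ R →ₐ[R] MvPolynomial ℕ (MvPolynomial σ R) :=
  aeval fun i => C (X i) + ∑ t ∈ u, X t * C (v t i)

/-- The normal-ordered product of the derivations `X i ↦ v t i`, `t ∈ u`. -/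
def normalOrdered : Module.End R (MvPolynomial σ R) :=
  ((lcoeff (MvPolynomial σ R) (Multiset.toFinsupp u.val)).restrictScalars R) ∘ₗ
    (polarize u v).toLinearMap

variable {u v}

lemma normalOrdered_apply (x : MvPolynomial σ R) :
    normalOrdered u v x = coeff (Multiset.toFinsupp u.val) (polarize u v x) :=
  rfl

lemma polarize_C (r : R) : polarize u v (C r) = C (C r) :=
  algHom_C _ r

lemma coeff_mul_polarize_X {w : Finset ℕ} (hw : w ⊆ u)
    (P : MvPolynomial ℕ (MvPolynomial σ R)) (i : σ) :
    coeff (Multiset.toFinsupp w.val) (P * polarize u v (X i)) =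
      coeff (Multiset.toFinsupp w.val) P * X i +
        ∑ t ∈ w, coeff (Multiset.toFinsupp (w.erase t).val) P * v t i := by
  have hterm : ∀ t, coeff (Multiset.toFinsupp w.val) (P * (X t * C (v t i))) =
      if t ∈ w then coeff (Multiset.toFinsupp (w.erase t).val) P * v t i else 0 := by
    intro t
    rw [← mul_assoc, mul_comm, coeff_C_mul, coeff_mul_X']
    split_ifs <;> simp_all [Finset.toFinsupp_val_sub_single, mul_comm]
  rw [polarize, aeval_X, mul_add, coeff_add, mul_comm P, coeff_C_mul, mul_comm, Finset.mul_sum,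
    coeff_sum]
  simp only [hterm, Finset.sum_ite_mem, Finset.inter_eq_right.mpr hw]

lemma coeff_polarize_of_subset {w : Finset ℕ} (hw : w ⊆ u) (x : MvPolynomial σ R) :
    coeff (Multiset.toFinsupp w.val) (polarize u v x) = normalOrdered w v x := by
  induction x using MvPolynomial.induction_on generalizing u w with
  | C r => rw [normalOrdered_apply, polarize_C, polarize_C]
  | add p q hp hq => rw [map_add, coeff_add, hp hw, hq hw, map_add]
  | mul_X p i hp =>
    rw [normalOrdered_apply, map_mul, map_mul, coeff_mul_polarize_X hw,
      coeff_mul_polarize_X subset_rfl, hp hw, normalOrdered_apply]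
    refine congrArg (_ + ·) (Finset.sum_congr rfl fun t _ => ?_)
    rw [hp ((Finset.erase_subset t w).trans hw), hp (Finset.erase_subset t w)]

lemma normalOrdered_C (r : R) : normalOrdered u v (C r) = if u = ∅ then C r else 0 := by
  rw [normalOrdered_apply, polarize_C, coeff_C]
  simp [eq_comm (a := (0 : ℕ →₀ ℕ))]

lemma normalOrdered_mul_X (p : MvPolynomial σ R) (i : σ) :
    normalOrdered u v (p * X i) =
      normalOrdered u v p * X i + ∑ t ∈ u, normalOrdered (u.erase t) v p * v t i := by
  simp only [normalOrdered_apply, map_mul, coeff_mul_polarize_X subset_rfl,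
    coeff_polarize_of_subset (Finset.erase_subset _ u)]

lemma normalOrdered_empty : normalOrdered ∅ v = 1 := by
  refine LinearMap.ext fun x => ?_
  induction x using MvPolynomial.induction_on with
  | C r => simp [normalOrdered_C]
  | add p q hp hq => simp only [map_add, hp, hq]
  | mul_X p i hp => simp_all [normalOrdered_mul_X]

lemma normalOrdered_congr {v' : ℕ → σ → MvPolynomial σ R} (h : ∀ t ∈ u, v t = v' t) :
    normalOrdered u v = normalOrdered u v' := by
  have : polarize u v = polarize u v' := by
    simp only [polarize]
    congr! 4 with i t ht
    rw [h t ht]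
  simp only [normalOrdered, this]

lemma normalOrdered_update_mul_X {t : ℕ} (ht : t ∈ u) (w : σ → MvPolynomial σ R)
    (p : MvPolynomial σ R) (i : σ) :
    normalOrdered u (Function.update v t w) (p * X i) =
      normalOrdered u (Function.update v t w) p * X i + normalOrdered (u.erase t) v p * w i +
        ∑ s ∈ u.erase t, normalOrdered (u.erase s) (Function.update v t w) p * v s i := by
  rw [normalOrdered_mul_X, ← Finset.add_sum_erase _ _ ht, Function.update_self, add_assoc,
    normalOrdered_congr (v' := v) fun s hs =>
      Function.update_of_ne (Finset.ne_of_mem_erase hs) _ _]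
  congr 2
  exact Finset.sum_congr rfl fun s hs => by
    rw [Function.update_of_ne (Finset.ne_of_mem_erase hs)]

lemma normalOrdered_insert_update_mul_X {t₀ : ℕ} (h₀ : t₀ ∉ u) (w : σ → MvPolynomial σ R)
    (p : MvPolynomial σ R) (i : σ) :
    normalOrdered (insert t₀ u) (Function.update v t₀ w) (p * X i) =
      normalOrdered (insert t₀ u) (Function.update v t₀ w) p * X i + normalOrdered u v p * w i +
        ∑ t ∈ u,
          normalOrdered (insert t₀ (u.erase t)) (Function.update v t₀ w) p * v t i := by
  rw [normalOrdered_update_mul_X (Finset.mem_insert_self t₀ u), Finset.erase_insert h₀]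
  exact congrArg₂ (· + ·) rfl (Finset.sum_congr rfl fun t ht => by
    rw [Finset.erase_insert_of_ne (ne_of_mem_of_not_mem ht h₀).symm])

lemma sum_normalOrdered_update_mul_X (W : ℕ → σ → MvPolynomial σ R) (p : MvPolynomial σ R)
    (i : σ) :
    ∑ t ∈ u, normalOrdered u (Function.update v t (W t)) (p * X i) =
      (∑ t ∈ u, normalOrdered u (Function.update v t (W t)) p) * X i +
        ∑ t ∈ u, normalOrdered (u.erase t) v p * W t i +
        ∑ t ∈ u, ∑ s ∈ u.erase t,
          normalOrdered (u.erase t) (Function.update v s (W s)) p * v t i := by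
  rw [Finset.sum_congr rfl fun t ht => normalOrdered_update_mul_X ht (W t) p i,
    Finset.sum_sum_erase_comm u]
  simp only [Finset.sum_add_distrib, Finset.sum_mul]

lemma derivation_normalOrdered (D : Derivation R (MvPolynomial σ R) (MvPolynomial σ R))
    {t₀ : ℕ} (h₀ : t₀ ∉ u) (x : MvPolynomial σ R) :
    D (normalOrdered u v x) =
      normalOrdered (insert t₀ u) (Function.update v t₀ fun i => D (X i)) x +
        ∑ t ∈ u, normalOrdered u (Function.update v t fun i => D (v t i)) x := by
  induction x using MvPolynomial.induction_on generalizing u with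
  | C r => by_cases hu : u = ∅ <;> simp [normalOrdered_C, hu]
  | add p q hp hq =>
    simp only [map_add, hp h₀, hq h₀, Finset.sum_add_distrib]
    abel
  | mul_X p i hp =>
    have hterm : ∀ t ∈ u, D (normalOrdered (u.erase t) v p * v t i) =
        normalOrdered (u.erase t) v p * D (v t i) +
          normalOrdered (insert t₀ (u.erase t)) (Function.update v t₀ fun i => D (X i)) p *
            v t i +
          ∑ s ∈ u.erase t,
            normalOrdered (u.erase t) (Function.update v s fun i => D (v s i)) p * v t i :=
      fun t _ => by
        rw [Derivation.leibniz, smul_eq_mul, smul_eq_mul,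
          hp (fun h => h₀ (Finset.mem_of_mem_erase h)), ← Finset.sum_mul]
        ring
    rw [normalOrdered_mul_X, map_add, map_sum, Finset.sum_congr rfl hterm, Derivation.leibniz,
      smul_eq_mul, smul_eq_mul, hp h₀, normalOrdered_insert_update_mul_X h₀,
      sum_normalOrdered_update_mul_X fun t i => D (v t i)]
    simp only [Finset.sum_add_distrib]
    ring

lemma normalOrdered_eq_zero_of_totalDegree_lt {x : MvPolynomial σ R}
    (hx : x.totalDegree < u.card) : normalOrdered u v x = 0 := by
  have hX : ∀ i, (C (X i) + ∑ t ∈ u, X t * C (v t i)).totalDegree ≤ 1 := fun i => by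
    refine (totalDegree_add _ _).trans (max_le (by rw [totalDegree_C]; exact zero_le_one) ?_)
    refine totalDegree_finsetSum_le fun t _ => (totalDegree_mul _ _).trans ?_
    rw [totalDegree_C, add_zero]
    exact (totalDegree_monomial_le (Finsupp.single t 1) (1 : MvPolynomial σ R)).trans_eq
      (by simp)
  have hpol : (polarize u v x).totalDegree ≤ x.totalDegree := totalDegree_aeval_le _ hX x
  have hcard : ∑ t ∈ (Multiset.toFinsupp u.val).support, Multiset.toFinsupp u.val t = u.card :=
    Multiset.toFinsupp_sum_eq u.val
  rw [normalOrdered_apply]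
  exact coeff_eq_zero_of_totalDegree_lt (by omega)

lemma normalOrdered_comp_homogeneousSubmodule_subtype {d : ℕ} (hd : d < u.card) :
    normalOrdered u v ∘ₗ (homogeneousSubmodule σ R d).subtype = 0 :=
  LinearMap.ext fun x => normalOrdered_eq_zero_of_totalDegree_lt
    ((x.2.totalDegree_le).trans_lt hd)

end Polarization

def normalOrderedDer (u : Finset ℕ) (c : ℕ → A) : Module.End ℂ (MvPolynomial ι ℂ) :=
  normalOrdered u fun t i => Der A ι ρ (c t) (X i)

def compDerSpan (r : ℕ) : Submodule ℂ (Module.End ℂ (MvPolynomial ι ℂ)) :=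
  Submodule.span ℂ {f | ∃ l : List A, l.length ≤ r ∧ f = compDer A ι ρ l}

section Enveloping

variable {A ι ρ}

lemma Der_X (a : A) (i : ι) : Der A ι ρ a (X i) = emb ι (ρ a (Finsupp.single i 1)) :=
  mkDerivation_X _ _ _

lemma Der_emb (a : A) (w : ι →₀ ℂ) : Der A ι ρ a (emb ι w) = emb ι (ρ a w) := by
  have : (Der A ι ρ a).toLinearMap ∘ₗ emb ι = emb ι ∘ₗ ρ a := by
    ext j
    simp [emb, Der_X]
  exact LinearMap.congr_fun this w

lemma Der_Der_X (a b : A) (i : ι) :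
    Der A ι ρ a (Der A ι ρ b (X i)) = Der A ι ρ (a * b) (X i) := by
  rw [Der_X, Der_emb, Der_X, map_mul, Module.End.mul_apply]

lemma compDer_cons (a : A) (l : List A) :
    compDer A ι ρ (a :: l) = (Der A ι ρ a).toLinearMap * compDer A ι ρ l := by
  rw [compDer, List.map_cons, List.prod_cons, compDer]

lemma Der_mul_normalOrderedDer {u : Finset ℕ} {t₀ : ℕ} (h₀ : t₀ ∉ u) (c : ℕ → A) (a : A) :
    (Der A ι ρ a).toLinearMap * normalOrderedDer A ι ρ u c =
      normalOrderedDer A ι ρ (insert t₀ u) (Function.update c t₀ a) +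
        ∑ t ∈ u, normalOrderedDer A ι ρ u (Function.update c t (a * c t)) := by
  refine LinearMap.ext fun x => ?_
  have hupd : ∀ t b, (fun s i => Der A ι ρ (Function.update c t b s) (X i)) =
      Function.update (fun s i => Der A ι ρ (c s) (X i)) t fun i => Der A ι ρ b (X i) :=
    fun t b => Function.comp_update (fun b i => Der A ι ρ b (X i)) c t b
  simp only [normalOrderedDer, Module.End.mul_apply, LinearMap.add_apply, LinearMap.sum_apply,
    Derivation.coeFn_coe, derivation_normalOrdered _ h₀, hupd, Der_Der_X]

lemma compDer_mem_span_normalOrderedDer (l : List A) :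
    compDer A ι ρ l ∈ Submodule.span ℂ
      (Set.range fun p : Finset ℕ × (ℕ → A) => normalOrderedDer A ι ρ p.1 p.2) := by
  induction l with
  | nil =>
    refine Submodule.subset_span ⟨(∅, 0), ?_⟩
    simp [normalOrderedDer, normalOrdered_empty, compDer]
  | cons a l ih =>
    rw [compDer_cons]
    refine (Submodule.span_le (p := (Submodule.span ℂ _).comap
      (LinearMap.mulLeft ℂ (Der A ι ρ a).toLinearMap))).mpr ?_ ih
    rintro _ ⟨⟨u, c⟩, rfl⟩
    obtain ⟨t₀, h₀⟩ := Infinite.exists_notMem_finset u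
    simp only [SetLike.mem_coe, Submodule.mem_comap, LinearMap.mulLeft_apply,
      Der_mul_normalOrderedDer h₀]
    exact add_mem (Submodule.subset_span ⟨(insert t₀ u, Function.update c t₀ a), rfl⟩)
      (sum_mem fun t _ => Submodule.subset_span ⟨(u, Function.update c t (a * c t)), rfl⟩)

lemma compDerSpan_mono : Monotone (compDerSpan A ι ρ) :=
  fun _ _ h => Submodule.span_mono fun _ ⟨l, hl, hf⟩ => ⟨l, hl.trans h, hf⟩

lemma Der_mul_mem_compDerSpan {r : ℕ} {g : Module.End ℂ (MvPolynomial ι ℂ)}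
    (hg : g ∈ compDerSpan A ι ρ r) (a : A) :
    (Der A ι ρ a).toLinearMap * g ∈ compDerSpan A ι ρ (r + 1) := by
  refine (Submodule.span_le (p := (compDerSpan A ι ρ (r + 1)).comap
    (LinearMap.mulLeft ℂ (Der A ι ρ a).toLinearMap))).mpr ?_ hg
  rintro _ ⟨l, hl, rfl⟩
  exact Submodule.subset_span ⟨a :: l, by simpa using hl, (compDer_cons a l).symm⟩

lemma normalOrderedDer_mem_compDerSpan (u : Finset ℕ) (c : ℕ → A) :
    normalOrderedDer A ι ρ u c ∈ compDerSpan A ι ρ u.card := by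
  induction u using Finset.induction_on generalizing c with
  | empty =>
    refine Submodule.subset_span ⟨[], le_rfl, ?_⟩
    simp [normalOrderedDer, normalOrdered_empty, compDer]
  | insert t₀ u h₀ ih =>
    have key := Der_mul_normalOrderedDer (ι := ι) (ρ := ρ) h₀ c (c t₀)
    rw [Function.update_eq_self] at key
    rw [eq_sub_of_add_eq key.symm, Finset.card_insert_of_notMem h₀]
    exact sub_mem (Der_mul_mem_compDerSpan (ih c) _)
      (sum_mem fun t _ => compDerSpan_mono (Nat.le_succ _) (ih _))

end Enveloping

theorem enveloping_action_degree_bound (d : ℕ) :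
    Submodule.span ℂ {φ : (MvPolynomial.homogeneousSubmodule ι ℂ d) →ₗ[ℂ]
        MvPolynomial ι ℂ | ∃ l : List A, φ = Phi A ι ρ d l} =
      Submodule.span ℂ {φ | ∃ l : List A, l.length ≤ d ∧ φ = Phi A ι ρ d l} := by
  set res := LinearMap.lcomp ℂ (MvPolynomial ι ℂ) (homogeneousSubmodule ι ℂ d).subtype
  have hE : Submodule.span ℂ {φ | ∃ l : List A, l.length ≤ d ∧ φ = Phi A ι ρ d l} =
      (compDerSpan A ι ρ d).map res := by
    rw [compDerSpan, Submodule.map_span]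
    congr 1
    ext φ
    simp [Phi, res, LinearMap.lcomp_apply', eq_comm]
  refine le_antisymm ?_ (Submodule.span_mono fun φ ⟨l, _, hφ⟩ => ⟨l, hφ⟩)
  rw [hE, Submodule.span_le]
  rintro _ ⟨l, rfl⟩
  refine (Submodule.span_le (p := ((compDerSpan A ι ρ d).map res).comap res)).mpr ?_
    (compDer_mem_span_normalOrderedDer l)
  rintro _ ⟨⟨u, c⟩, rfl⟩
  by_cases hu : u.card ≤ d
  · exact Submodule.mem_map_of_mem
      (compDerSpan_mono hu (normalOrderedDer_mem_compDerSpan u c))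
  · have : res (normalOrderedDer A ι ρ u c) = 0 :=
      normalOrdered_comp_homogeneousSubmodule_subtype (by omega)
    rw [SetLike.mem_coe, Submodule.mem_comap, this]
    exact zero_mem _

end
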